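/- There is no sequence of polynomials P_κ(x) of degree ≤ 2 on ℝ^N with ΔP_κ = 0 such that |P_κ(x) − |x|²| ≤ c·δ_κ^{2+σ} for all x in the sets I_{1,κ} ∪ … ∪ I_{N,κ}, where δ_κ = 2^{−κ−2}, σ ∈ (0,1), t_κ = ((2^{−κ}+2^{−κ−1})/2, 0, …, 0), I_{1,κ} = [2^{−κ−1}, 2^{−κ}] × {0}^{N−1}, and for j > 1, I_{j,κ} = {t_κ + s·e_j : s ∈ [−δ_κ, δ_κ]} (segments through t_κ in each coordinate direction). More precisely: if P is a harmonic polynomial of degree ≤ 2 and |P(x) − |x|²| ≤ c δ^{2+σ} on the union of N mutually orthogonal coordinate segments of length 2δ through a point t (one in each coordinate direction), then c δ^{2+σ} ≥ c' δ² for a dimensional constant c' > 0, contradicting σ > 0 for small δ. -/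

import Mathlib

/-!
Along each coordinate line through `t`, the error `P - ‖·‖²` is a quadratic in the line parameter
whose leading coefficient is `b j j - 1`; the second difference with step `δ` recovers it, so
`|b j j - 1| δ² ≤ 2 c δ^{2+σ}` for every `j`. Harmonicity `∑ j, b j j = 0` forces some `b j j ≤ 0`,
i.e. `|b j j - 1| ≥ 1`, hence `δ² ≤ 2 c δ^{2+σ}`.
-/

open Finset

lemma abs_mul_sq_le_of_second_difference {f : ℝ → ℝ} {α β γ δ E : ℝ}
    (hf : ∀ s, f s = α + β * s + γ * s ^ 2)
    (hpos : |f δ| ≤ E) (hneg : |f (-δ)| ≤ E) (hzero : |f 0| ≤ E) :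
    |γ| * δ ^ 2 ≤ 2 * E := by
  have hdiff : f δ + f (-δ) - 2 * f 0 = 2 * (γ * δ ^ 2) := by simp only [hf]; ring
  rw [← abs_of_nonneg (sq_nonneg δ), ← abs_mul, abs_le]
  rw [abs_le] at hpos hneg hzero
  constructor <;> linarith

lemma le_of_sum_eq_zero_of_abs_sub_one_mul_le {ι : Type*} [Fintype ι] [Nonempty ι]
    {d : ι → ℝ} {x y : ℝ} (hsum : ∑ i, d i = 0) (hx : 0 ≤ x) (h : ∀ i, |d i - 1| * x ≤ y) :
    x ≤ y := by
  obtain ⟨i, -, hi⟩ := exists_le_of_sum_le (f := d) (g := fun _ => 0) univ_nonempty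
    (by simp [hsum])
  have hone : 1 ≤ |d i - 1| := by rw [abs_sub_comm]; exact le_abs.mpr (Or.inl (by linarith))
  nlinarith [h i]

section CoordinateLine

variable {ι : Type*} [Fintype ι] [DecidableEq ι]

lemma quadratic_add_single {a₀ : ℝ} {a : ι → ℝ} {b : ι → ι → ℝ}
    {P : EuclideanSpace ℝ ι → ℝ}
    (hP : ∀ x, P x = a₀ + (∑ j, a j * x j) + ∑ j, ∑ j', b j j' * x j * x j')
    (t : EuclideanSpace ℝ ι) (j : ι) :
    ∃ β, ∀ s, P (t + EuclideanSpace.single j s) = P t + β * s + b j j * s ^ 2 := by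
  refine ⟨a j + (∑ k, b k j * t k) + ∑ k, b j k * t k, fun s => ?_⟩
  have hcoord : ∀ k, (t + EuclideanSpace.single j s) k = t k + if k = j then s else 0 :=
    fun k => by simp
  simp only [hP, hcoord, mul_add, add_mul, mul_ite, ite_mul, mul_zero, zero_mul,
    sum_add_distrib, sum_ite_irrel, sum_const_zero, sum_ite_eq', mem_univ, if_true,
    sum_mul]
  ring_nf

lemma norm_add_single_sq (t : EuclideanSpace ℝ ι) (j : ι) (s : ℝ) :
    ‖t + EuclideanSpace.single j s‖ ^ 2 = ‖t‖ ^ 2 + 2 * t j * s + s ^ 2 := by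
  rw [norm_add_sq_real]
  simp [EuclideanSpace.inner_single_right]
  ring

lemma quadratic_sub_norm_sq_add_single {a₀ : ℝ} {a : ι → ℝ} {b : ι → ι → ℝ}
    {P : EuclideanSpace ℝ ι → ℝ}
    (hP : ∀ x, P x = a₀ + (∑ j, a j * x j) + ∑ j, ∑ j', b j j' * x j * x j')
    (t : EuclideanSpace ℝ ι) (j : ι) :
    ∃ β, ∀ s, P (t + EuclideanSpace.single j s) - ‖t + EuclideanSpace.single j s‖ ^ 2
      = (P t - ‖t‖ ^ 2) + β * s + (b j j - 1) * s ^ 2 := by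
  obtain ⟨β, hβ⟩ := quadratic_add_single hP t j
  exact ⟨β - 2 * t j, fun s => by rw [hβ, norm_add_single_sq]; ring⟩

end CoordinateLine

/-- the counter-example, precise form: there is a dimensional
constant c' > 0 such that whenever P is a harmonic polynomial of degree ≤ 2
(written with coefficients, harmonicity being the trace condition ∑_j b_{jj}=0)
and `|P(x) − |x|²| ≤ c δ^{2+σ}` on the union of the N coordinate segments of
half-length δ through a point t, then `c δ^{2+σ} ≥ c' δ²`.  (Since σ > 0, this
rules out such approximation for all small δ.) -/
theorem stmt13 (N : ℕ) (hN : 2 ≤ N) :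
    ∃ c' > (0:ℝ), ∀ (a₀ : ℝ) (a : Fin N → ℝ) (b : Fin N → Fin N → ℝ),
      (∑ j, b j j) = 0 →
      ∀ (P : EuclideanSpace ℝ (Fin N) → ℝ),
      (∀ x, P x = a₀ + (∑ j, a j * x j) + ∑ j, ∑ j', b j j' * x j * x j') →
      ∀ (c σ δ : ℝ), 0 < c → 0 < σ → σ < 1 → 0 < δ →
      ∀ t : EuclideanSpace ℝ (Fin N),
      (∀ j : Fin N, ∀ s ∈ Set.Icc (-δ) δ,
        |P (t + EuclideanSpace.single j s) - ‖t + EuclideanSpace.single j s‖ ^ 2|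
          ≤ c * δ ^ ((2:ℝ) + σ)) →
      c' * δ ^ 2 ≤ c * δ ^ ((2:ℝ) + σ) := by
  refine ⟨1 / 2, by norm_num, ?_⟩
  intro a₀ a b htrace P hP c σ δ _ _ _ hδ t hbound
  have hdiag : ∀ j, |b j j - 1| * δ ^ 2 ≤ 2 * (c * δ ^ ((2:ℝ) + σ)) := fun j => by
    obtain ⟨β, hβ⟩ := quadratic_sub_norm_sq_add_single hP t j
    exact abs_mul_sq_le_of_second_difference hβ (hbound j δ ⟨by linarith, le_rfl⟩)
      (hbound j (-δ) ⟨le_rfl, by linarith⟩) (hbound j 0 ⟨by linarith, hδ.le⟩)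
  have : NeZero N := ⟨by omega⟩
  have := le_of_sum_eq_zero_of_abs_sub_one_mul_le htrace (sq_nonneg δ) hdiag
  linarith
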